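/- Let R be a commutative integral domain and let ⋆ be a semistar operation on R that is stable and of finite type. If R is ⋆-Noetherian (i.e., R satisfies the ascending chain condition on quasi-⋆-ideals), then ⋆-Min(I) is finite for every nonzero ideal I of R. -/

import Mathlib

open Pointwise

/-- A semistar operation on an integral domain `R` with quotient field `K`:
a map `E ↦ E^⋆` on the nonzero `R`-submodules of `K` satisfying the usual axioms.
(The map is defined on all submodules, but the axioms are only required for the
nonzero ones.) -/
structure SemistarOperation (R K : Type*) [CommRing R] [IsDomain R] [Field K]
    [Algebra R K] [IsFractionRing R K] where
  star : Submodule R K → Submodule R K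
  smul_star : ∀ (x : K), x ≠ 0 → ∀ E : Submodule R K, E ≠ ⊥ → star (x • E) = x • star E
  mono : ∀ E F : Submodule R K, E ≠ ⊥ → E ≤ F → star E ≤ star F
  le_star : ∀ E : Submodule R K, E ≠ ⊥ → E ≤ star E
  star_star : ∀ E : Submodule R K, E ≠ ⊥ → star (star E) = star E

namespace SemistarOperation

variable {R K : Type*} [CommRing R] [IsDomain R] [Field K] [Algebra R K] [IsFractionRing R K]
variable (s : SemistarOperation R K)

/-- `⋆` is of finite type: for every nonzero submodule `E`, the module `E^⋆` is the
union of the `F^⋆` over the nonzero finitely generated submodules `F ⊆ E`. -/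
def FiniteType : Prop :=
  ∀ E : Submodule R K, E ≠ ⊥ → ∀ x : K,
    x ∈ s.star E ↔ ∃ F : Submodule R K, F.FG ∧ F ≠ ⊥ ∧ F ≤ E ∧ x ∈ s.star F

/-- `I^⋆`, for an ideal `I` of `R` (viewing `I` as a submodule of `K`). -/
def idealStar (I : Ideal R) : Submodule R K :=
  s.star (Submodule.map (Algebra.linearMap R K) I)

/-- `I^⋆ ∩ R`, as an ideal of `R`. -/
def contract (I : Ideal R) : Ideal R :=
  Submodule.comap (Algebra.linearMap R K) (s.idealStar I)

/-- A (nonzero) ideal `I` of `R` is a quasi-`⋆`-ideal if `I^⋆ ∩ R = I`. -/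
def IsQuasiStarIdeal (I : Ideal R) : Prop :=
  I ≠ ⊥ ∧ s.contract I = I

/-- A nonzero ideal `L` of `R` is `⋆`-finite if `L^⋆ = F^⋆` for some nonzero
finitely generated ideal `F` of `R`. -/
def IsStarFinite (L : Ideal R) : Prop :=
  L ≠ ⊥ ∧ ∃ F : Ideal R, F.FG ∧ F ≠ ⊥ ∧ s.idealStar F = s.idealStar L

/-- `⋆` is stable: it distributes over finite intersections (of nonzero submodules
with nonzero intersection). -/
def Stable : Prop :=
  ∀ E F : Submodule R K, E ≠ ⊥ → F ≠ ⊥ → E ⊓ F ≠ ⊥ →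
    s.star (E ⊓ F) = s.star E ⊓ s.star F

/-- `⋆-Min(I)`: the set of quasi-`⋆`-prime ideals of `R` minimal over `I`. -/
def starMin (I : Ideal R) : Set (Ideal R) :=
  {P | Minimal (fun Q : Ideal R => Q.IsPrime ∧ s.IsQuasiStarIdeal Q ∧ I ≤ Q) P}

/-- A nonzero ideal `I` of `R` is a `⋆`-SFT-ideal if there are a finitely generated
ideal `J ⊆ I` and a positive integer `k` with `a ^ k ∈ J^⋆` for every `a ∈ I^⋆`. -/
def IsSFT (I : Ideal R) : Prop :=
  I ≠ ⊥ ∧ ∃ J : Ideal R, J.FG ∧ J ≤ I ∧ ∃ k : ℕ, 0 < k ∧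
    ∀ a ∈ s.idealStar I, a ^ k ∈ s.idealStar J

/-- `R` is a `⋆`-SFT-ring if every nonzero ideal of `R` is a `⋆`-SFT-ideal. -/
def IsSFTRing : Prop := ∀ I : Ideal R, I ≠ ⊥ → s.IsSFT I

end SemistarOperation

/-!
Noetherian induction on quasi-`⋆`-ideals. Since `⋆-Min(I) = ⋆-Min(I^⋆ ∩ R)`, it suffices
to treat a quasi-`⋆`-ideal `J`. If `J = R` or `J` is prime, `⋆-Min(J)` has at most one
element. Otherwise pick `a, b ∉ J` with `ab ∈ J`: every `P ∈ ⋆-Min(J)` contains `a` or `b`,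
hence lies in `⋆-Min((J + aR)^⋆ ∩ R)` or `⋆-Min((J + bR)^⋆ ∩ R)`, and these
quasi-`⋆`-ideals strictly contain `J`.
-/

theorem IsFractionRing.map_linearMap_ne_bot {R K : Type*} [CommRing R] [Field K] [Algebra R K]
    [IsFractionRing R K] {I : Ideal R} (hI : I ≠ ⊥) :
    Submodule.map (Algebra.linearMap R K) I ≠ ⊥ := by
  obtain ⟨x, hx, hx0⟩ := (Submodule.ne_bot_iff _).mp hI
  refine (Submodule.ne_bot_iff _).mpr ⟨algebraMap R K x, Submodule.mem_map_of_mem hx, ?_⟩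
  exact (map_ne_zero_iff _ (IsFractionRing.injective R K)).mpr hx0

theorem Ideal.sup_span_singleton_ne_bot {R : Type*} [Semiring R] {J : Ideal R} {c : R}
    (hc : c ∉ J) : J ⊔ Ideal.span {c} ≠ ⊥ := by
  refine ne_bot_of_le_ne_bot ?_ le_sup_right
  exact Ideal.span_singleton_eq_bot.not.mpr fun h => hc (h ▸ J.zero_mem)

namespace SemistarOperation

variable {R K : Type*} [CommRing R] [IsDomain R] [Field K] [Algebra R K] [IsFractionRing R K]
variable (s : SemistarOperation R K)

theorem le_contract {I : Ideal R} (hI : I ≠ ⊥) : I ≤ s.contract I := fun _ hx =>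
  s.le_star _ (IsFractionRing.map_linearMap_ne_bot hI) (Submodule.mem_map_of_mem hx)

theorem contract_mono {I J : Ideal R} (hI : I ≠ ⊥) (h : I ≤ J) :
    s.contract I ≤ s.contract J :=
  Submodule.comap_mono <|
    s.mono _ _ (IsFractionRing.map_linearMap_ne_bot hI) (Submodule.map_mono h)

theorem contract_le {I Q : Ideal R} (hI : I ≠ ⊥) (hQ : s.IsQuasiStarIdeal Q) (h : I ≤ Q) :
    s.contract I ≤ Q :=
  hQ.2 ▸ s.contract_mono hI h

theorem idealStar_contract {I : Ideal R} (hI : I ≠ ⊥) :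
    s.idealStar (s.contract I) = s.idealStar I := by
  set E := Submodule.map (Algebra.linearMap R K) I
  have hE : E ≠ ⊥ := IsFractionRing.map_linearMap_ne_bot hI
  have hmap : Submodule.map (Algebra.linearMap R K) (s.contract I) =
      LinearMap.range (Algebra.linearMap R K) ⊓ s.star E :=
    Submodule.map_comap_eq _ _
  have hle : E ≤ Submodule.map (Algebra.linearMap R K) (s.contract I) :=
    hmap ▸ le_inf LinearMap.map_le_range (s.le_star _ hE)
  apply le_antisymm
  · calc s.idealStar (s.contract I) ≤ s.star (s.star E) :=
          s.mono _ _ (ne_bot_of_le_ne_bot hE hle) (hmap ▸ inf_le_right)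
      _ = s.idealStar I := s.star_star _ hE
  · exact s.mono _ _ hE hle

theorem isQuasiStarIdeal_contract {I : Ideal R} (hI : I ≠ ⊥) :
    s.IsQuasiStarIdeal (s.contract I) :=
  ⟨ne_bot_of_le_ne_bot hI (s.le_contract hI),
    congrArg (Submodule.comap _) (s.idealStar_contract hI)⟩

theorem starMin_contract {I : Ideal R} (hI : I ≠ ⊥) :
    s.starMin (s.contract I) = s.starMin I := by
  have hpred : (fun Q : Ideal R => Q.IsPrime ∧ s.IsQuasiStarIdeal Q ∧ s.contract I ≤ Q) =
      fun Q => Q.IsPrime ∧ s.IsQuasiStarIdeal Q ∧ I ≤ Q :=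
    funext fun _ => propext <| and_congr_right fun _ =>
      ⟨fun h => ⟨h.1, (s.le_contract hI).trans h.2⟩,
        fun h => ⟨h.1, s.contract_le hI h.1 h.2⟩⟩
  unfold starMin
  rw [hpred]

theorem mem_starMin_of_le {I J Q : Ideal R} (hQ : Q ∈ s.starMin I) (hIJ : I ≤ J)
    (hJQ : J ≤ Q) : Q ∈ s.starMin J := by
  simp only [starMin, Set.mem_ofPred_eq] at hQ ⊢
  exact hQ.mono (fun _ hP => ⟨hP.1, hP.2.1, hIJ.trans hP.2.2⟩) ⟨hQ.1.1, hQ.1.2.1, hJQ⟩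

theorem starMin_top : s.starMin ⊤ = ∅ :=
  Set.eq_empty_of_forall_notMem fun _ hQ => hQ.1.1.ne_top (top_le_iff.mp hQ.1.2.2)

theorem starMin_of_isPrime {J : Ideal R} (hJ : s.IsQuasiStarIdeal J) (hJp : J.IsPrime) :
    s.starMin J = {J} := by
  have hmin : J ∈ s.starMin J := ⟨⟨hJp, hJ, le_rfl⟩, fun _ hQ _ => hQ.2.2⟩
  ext Q
  exact ⟨fun hQ => le_antisymm (hQ.2 hmin.1 hQ.1.2.2) hQ.1.2.2, fun h => h ▸ hmin⟩

theorem lt_contract_sup_span {J : Ideal R} {c : R} (hc : c ∉ J) :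
    J < s.contract (J ⊔ Ideal.span {c}) := by
  have hle := s.le_contract (Ideal.sup_span_singleton_ne_bot hc)
  refine lt_of_le_of_ne (le_sup_left.trans hle) fun h => hc ?_
  exact h ▸ hle (Ideal.mem_sup_right (Ideal.mem_span_singleton_self c))

theorem mem_starMin_contract_sup_span {J Q : Ideal R} {c : R} (hQ : Q ∈ s.starMin J)
    (hc : c ∉ J) (hcQ : c ∈ Q) : Q ∈ s.starMin (s.contract (J ⊔ Ideal.span {c})) :=
  have hne := Ideal.sup_span_singleton_ne_bot hc
  s.mem_starMin_of_le hQ (le_sup_left.trans (s.le_contract hne)) <|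
    s.contract_le hne hQ.1.2.1 (sup_le hQ.1.2.2 ((Ideal.span_singleton_le_iff_mem Q).mpr hcQ))

theorem starMin_finite_of_forall_lt {J : Ideal R} (hJ : s.IsQuasiStarIdeal J)
    (ih : ∀ J', s.IsQuasiStarIdeal J' → J < J' → (s.starMin J').Finite) :
    (s.starMin J).Finite := by
  by_cases hJp : J.IsPrime
  · exact s.starMin_of_isPrime hJ hJp ▸ Set.finite_singleton J
  rcases Ideal.not_isPrime_iff.mp hJp with rfl | ⟨a, ha, b, hb, hab⟩
  · exact s.starMin_top ▸ Set.finite_empty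
  have hfin : ∀ c ∉ J, (s.starMin (s.contract (J ⊔ Ideal.span {c}))).Finite := fun c hc =>
    ih _ (s.isQuasiStarIdeal_contract (Ideal.sup_span_singleton_ne_bot hc))
      (s.lt_contract_sup_span hc)
  refine ((hfin a ha).union (hfin b hb)).subset fun Q hQ => ?_
  rcases hQ.1.1.mem_or_mem (hQ.1.2.2 hab) with haQ | hbQ
  · exact Or.inl (s.mem_starMin_contract_sup_span hQ ha haQ)
  · exact Or.inr (s.mem_starMin_contract_sup_span hQ hb hbQ)

theorem wellFoundedGT_of_acc
    (hacc : ∀ f : ℕ →o Ideal R, (∀ n, s.IsQuasiStarIdeal (f n)) →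
      ∃ n, ∀ m, n ≤ m → f m = f n) :
    WellFoundedGT {J : Ideal R // s.IsQuasiStarIdeal J} := by
  refine wellFoundedGT_iff_monotone_chain_condition.mpr fun f => ?_
  obtain ⟨n, hn⟩ := hacc ⟨fun m => f m, fun _ _ h => f.mono h⟩ fun m => (f m).2
  exact ⟨n, fun m hm => Subtype.ext (hn m hm).symm⟩

end SemistarOperation

theorem starMin_finite_of_starNoetherian_general {R K : Type*} [CommRing R] [IsDomain R]
    [Field K] [Algebra R K] [IsFractionRing R K] (s : SemistarOperation R K)
    (hacc : ∀ f : ℕ →o Ideal R, (∀ n, s.IsQuasiStarIdeal (f n)) →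
      ∃ n, ∀ m, n ≤ m → f m = f n) :
    ∀ I : Ideal R, I ≠ ⊥ → (s.starMin I).Finite := by
  have := s.wellFoundedGT_of_acc hacc
  suffices h : ∀ J : {J : Ideal R // s.IsQuasiStarIdeal J}, (s.starMin J).Finite from
    fun I hI => s.starMin_contract hI ▸ h ⟨_, s.isQuasiStarIdeal_contract hI⟩
  intro J
  induction J using WellFoundedGT.induction with
  | _ J ih => exact s.starMin_finite_of_forall_lt J.2 fun J' hJ' hlt => ih ⟨J', hJ'⟩ hlt

/-- Let `⋆` be a stable semistar operation of finite type on the integral domain `R`.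
If `R` is `⋆`-Noetherian (i.e. `R` has the a.c.c. on quasi-`⋆`-ideals), then
`⋆-Min(I)` is finite for every nonzero ideal `I` of `R`. -/
theorem starMin_finite_of_starNoetherian {R K : Type*} [CommRing R] [IsDomain R]
    [Field K] [Algebra R K] [IsFractionRing R K] (s : SemistarOperation R K)
    (hstable : s.Stable) (hs : s.FiniteType)
    (hacc : ∀ f : ℕ →o Ideal R, (∀ n, s.IsQuasiStarIdeal (f n)) →
      ∃ n, ∀ m, n ≤ m → f m = f n) :
    ∀ I : Ideal R, I ≠ ⊥ → (s.starMin I).Finite :=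
  starMin_finite_of_starNoetherian_general s hacc
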